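/- With a(0), a(1), a(2), λ real, the characteristic polynomial of the cavity matrix A (defined as λ·[[a(0), −2a(1), a(2)], [a(1), a(0)−a(1)−2a(2), −2a(1)+3a(2)], [a(2), 4a(1)−6a(2), a(0)−6a(1)+6a(2)]]) is (x − μ₁)²(x − μ₂), where μ₁ = λ(a(0) − 2a(1) + a(2)) and μ₂ = λ(a(0) − 3a(1) + 2a(2)). In particular, A has eigenvalue μ₁ with algebraic multiplicity two and μ₂ with multiplicity one. -/

import Mathlib

theorem stmt8 (l a0 a1 a2 : ℝ)
    (A : Matrix (Fin 3) (Fin 3) ℝ)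
    (hA : A = l • Matrix.of
      ![![a0, -2 * a1, a2],
        ![a1, a0 - a1 - 2 * a2, -2 * a1 + 3 * a2],
        ![a2, 4 * a1 - 6 * a2, a0 - 6 * a1 + 6 * a2]])
    (μ1 μ2 : ℝ) (hμ1 : μ1 = l * (a0 - 2 * a1 + a2)) (hμ2 : μ2 = l * (a0 - 3 * a1 + 2 * a2)) :
    A.charpoly = (Polynomial.X - Polynomial.C μ1) ^ 2 * (Polynomial.X - Polynomial.C μ2) := by
  subst hA hμ1 hμ2
  rw [Matrix.charpoly, Matrix.det_fin_three]
  simp only [Matrix.charmatrix_apply_eq, Matrix.charmatrix_apply_ne, Matrix.smul_of, Matrix.of_apply,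
    Matrix.smul_cons, Matrix.smul_empty, smul_eq_mul, Matrix.cons_val, ne_eq, Fin.reduceEq,
    not_false_eq_true, map_mul, map_sub, map_add, map_neg, map_ofNat]
  ring
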